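/- arXiv:2303.14623 — 2 statements merged into one kernel-verified Lean document; each statement's English description precedes it below -/
import Mathlib

section
/- (Performance Difference Lemma, finite-horizon version) For any two nonstationary policies π and π' in a finite-horizon MDP with horizon T and reward function f, J(π', f) − J(π, f) = Σ_{t=1}^T E_{s_t ∼ ρ_{π'}^t}[ E_{a ∼ π'(s_t)}[Q^π_t(s_t, a)] − E_{a ∼ π(s_t)}[Q^π_t(s_t, a)] ], where Q^π_t(s,a) is the expected sum of f along a rollout of π starting from (s,a) at time t, and ρ_{π'}^t is the state visitation distribution of π' at time t. -/
/-! Let `hybrid t` be the value of following `π'` for the first `t` steps and `π` afterwards,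
i.e. the mean of `Q^π_t` when the state is drawn from `π'`'s visitation law at time `t` and the
action from `π`. Then `hybrid 0 = J π` and `hybrid T = 0`, and by the Bellman equation for `Q^π`
the advantage term at time `t` equals the expected reward of `π'` at time `t` plus
`hybrid (t + 1) - hybrid t`. Summing over `t` telescopes to `J π' - J π`. -/

open scoped BigOperators

/-- A finite-horizon Markov decision process (dynamics part): transition kernel and
initial state distribution. -/
structure FinMDP (S A : Type) where
  trans : S → A → PMF S
  init : PMF S

/-- A nonstationary (time-indexed) stochastic policy. -/
abbrev Policy (S A : Type) := ℕ → S → PMF A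

namespace FinMDP

variable {S A : Type}

/-- One step of the state-action occupancy dynamics under policy `π` at time `t`. -/
noncomputable def step (M : FinMDP S A) (π : Policy S A) (t : ℕ) (p : PMF (S × A)) :
    PMF (S × A) :=
  p.bind fun sa => (M.trans sa.1 sa.2).bind fun s' => (π t s').map fun a' => (s', a')

/-- The state-action visitation distribution of policy `π` at time `t`. -/
noncomputable def visit (M : FinMDP S A) (π : Policy S A) : ℕ → PMF (S × A)
  | 0 => M.init.bind fun s => (π 0 s).map fun a => (s, a)
  | t + 1 => M.step π (t + 1) (M.visit π t)

/-- Expectation of a reward `f` under a state-action distribution. -/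
noncomputable def expF [Fintype S] [Fintype A] (p : PMF (S × A)) (f : S → A → ℝ) : ℝ :=
  ∑ sa : S × A, (p sa).toReal * f sa.1 sa.2

/-- Value of policy `π` under reward `f` over horizon `T`. -/
noncomputable def J [Fintype S] [Fintype A] (M : FinMDP S A) (π : Policy S A)
    (f : S → A → ℝ) (T : ℕ) : ℝ :=
  ∑ t ∈ Finset.range T, expF (M.visit π t) f

/-- State-action visitation distribution of a rollout of `π` started at `sa` at time `t`,
after `k` further steps. -/
noncomputable def visitFrom (M : FinMDP S A) (π : Policy S A) (t : ℕ) (sa : S × A) :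
    ℕ → PMF (S × A)
  | 0 => PMF.pure sa
  | k + 1 => M.step π (t + k + 1) (M.visitFrom π t sa k)

/-- `Q` value: expected cumulative `f` of rolling out `π` from `(s, a)` at time `t`
until the end of horizon `T`. -/
noncomputable def Q [Fintype S] [Fintype A] (M : FinMDP S A) (π : Policy S A)
    (f : S → A → ℝ) (T t : ℕ) (s : S) (a : A) : ℝ :=
  ∑ k ∈ Finset.range (T - t), expF (M.visitFrom π t (s, a) k) f

end FinMDP

noncomputable def PMF.compProd {S A : Type} (d : PMF S) (q : S → PMF A) : PMF (S × A) :=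
  d.bind fun s => (q s).map fun a => (s, a)

theorem PMF.compProd_map_fst {S A : Type} (d : PMF S) (q : S → PMF A) :
    (d.compProd q).map Prod.fst = d := by
  simp only [PMF.compProd, PMF.map_bind, PMF.map_comp, Function.comp_def]
  exact (congrArg d.bind (funext fun s => PMF.map_const (q s) s)).trans (PMF.bind_pure d)

namespace FinMDP

variable {S A : Type}

section Expectation

variable [Fintype S] [Fintype A]

theorem expF_bind {α : Type} [Fintype α] (p : PMF α) (g : α → PMF (S × A))
    (f : S → A → ℝ) : expF (p.bind g) f = ∑ x : α, (p x).toReal * expF (g x) f := by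
  have bind_toReal : ∀ sa : S × A,
      ((p.bind g) sa).toReal = ∑ x : α, (p x).toReal * ((g x) sa).toReal := by
    intro sa
    rw [PMF.bind_apply, tsum_fintype, ENNReal.toReal_sum fun x _ =>
      ENNReal.mul_ne_top (PMF.apply_ne_top _ _) (PMF.apply_ne_top _ _)]
    simp only [ENNReal.toReal_mul]
  simp only [expF, bind_toReal, Finset.sum_mul, Finset.mul_sum, mul_assoc]
  exact Finset.sum_comm

theorem expF_pure (sa : S × A) (f : S → A → ℝ) : expF (PMF.pure sa) f = f sa.1 sa.2 := by
  rw [expF, Finset.sum_eq_single sa (fun b _ hb => by simp [PMF.pure_apply, hb])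
    (fun h => absurd (Finset.mem_univ sa) h)]
  simp

theorem expF_compProd (d : PMF S) (q : S → PMF A) (g : S → A → ℝ) :
    expF (d.compProd q) g = ∑ s : S, (d s).toReal * ∑ a : A, (q s a).toReal * g s a := by
  simp only [PMF.compProd, ← PMF.bind_pure_comp, Function.comp_def, expF_bind, expF_pure]

end Expectation

theorem step_bind {α : Type} (M : FinMDP S A) (π : Policy S A) (u : ℕ) (p : PMF α)
    (g : α → PMF (S × A)) :
    M.step π u (p.bind g) = p.bind fun x => M.step π u (g x) := by
  simp only [step, PMF.bind_bind]

theorem step_eq_compProd (M : FinMDP S A) (π : Policy S A) (u : ℕ) (p : PMF (S × A)) :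
    M.step π u p = (p.bind fun sa => M.trans sa.1 sa.2).compProd (π u) := by
  simp only [step, PMF.compProd, PMF.bind_bind]

theorem visit_zero_map_fst (M : FinMDP S A) (π : Policy S A) :
    (M.visit π 0).map Prod.fst = M.init :=
  PMF.compProd_map_fst _ _

theorem visit_succ_map_fst (M : FinMDP S A) (π : Policy S A) (t : ℕ) :
    (M.visit π (t + 1)).map Prod.fst = (M.visit π t).bind fun sa => M.trans sa.1 sa.2 := by
  rw [visit, step_eq_compProd, PMF.compProd_map_fst]

theorem visit_eq_compProd (M : FinMDP S A) (π : Policy S A) (t : ℕ) :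
    M.visit π t = ((M.visit π t).map Prod.fst).compProd (π t) := by
  cases t with
  | zero => rw [visit_zero_map_fst]; rfl
  | succ t => rw [visit_succ_map_fst, visit, step_eq_compProd]

theorem visitFrom_succ (M : FinMDP S A) (π : Policy S A) (t : ℕ) (sa : S × A) (k : ℕ) :
    M.visitFrom π t sa (k + 1) =
      (M.step π (t + 1) (PMF.pure sa)).bind fun x => M.visitFrom π (t + 1) x k := by
  induction k with
  | zero => simp only [visitFrom, Nat.add_zero, PMF.bind_pure]
  | succ k ih =>
    rw [visitFrom, ih, step_bind, show t + (k + 1) + 1 = t + 1 + k + 1 by omega]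
    rfl

theorem bind_visitFrom_succ (M : FinMDP S A) (π : Policy S A) (t : ℕ) (p : PMF (S × A))
    (k : ℕ) :
    (p.bind fun sa => M.visitFrom π t sa (k + 1)) =
      (M.step π (t + 1) p).bind fun x => M.visitFrom π (t + 1) x k := by
  simp_rw [visitFrom_succ, ← PMF.bind_bind, ← step_bind, PMF.bind_pure]

theorem visit_eq_bind_visitFrom (M : FinMDP S A) (π : Policy S A) (k : ℕ) :
    M.visit π k = (M.visit π 0).bind fun sa => M.visitFrom π 0 sa k := by
  induction k with
  | zero => exact (PMF.bind_pure _).symm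
  | succ k ih =>
    simp only [visit, visitFrom, Nat.zero_add]
    rw [ih, step_bind]
    rfl

section Value

variable [Fintype S] [Fintype A]

theorem expF_Q (M : FinMDP S A) (π : Policy S A) (f : S → A → ℝ) (T t : ℕ)
    (p : PMF (S × A)) :
    expF p (M.Q π f T t) =
      ∑ k ∈ Finset.range (T - t), expF (p.bind fun sa => M.visitFrom π t sa k) f := by
  simp only [expF_bind]
  rw [Finset.sum_comm]
  simp only [← Finset.mul_sum]
  rfl

theorem expF_Q_horizon (M : FinMDP S A) (π : Policy S A) (f : S → A → ℝ) (T : ℕ)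
    (p : PMF (S × A)) : expF p (M.Q π f T T) = 0 := by
  simp [expF_Q]

/-- The Bellman equation for `Q`, averaged over an arbitrary state-action law `p`. -/
theorem expF_Q_eq_add (M : FinMDP S A) (π : Policy S A) (f : S → A → ℝ) {T t : ℕ}
    (ht : t < T) (p : PMF (S × A)) :
    expF p (M.Q π f T t) = expF p f + expF (M.step π (t + 1) p) (M.Q π f T (t + 1)) := by
  rw [expF_Q, expF_Q, show T - t = T - (t + 1) + 1 by omega, Finset.sum_range_succ']
  simp only [bind_visitFrom_succ]
  simp only [visitFrom, PMF.bind_pure]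
  ring

theorem J_eq_expF_Q (M : FinMDP S A) (π : Policy S A) (f : S → A → ℝ) (T : ℕ) :
    M.J π f T = expF (M.visit π 0) (M.Q π f T 0) := by
  rw [expF_Q, Nat.sub_zero, J]
  simp only [← visit_eq_bind_visitFrom]

end Value

end FinMDP

open FinMDP in
/-- **Performance Difference Lemma (finite-horizon version).** For any two nonstationary
policies `π` and `π'`, the value gap decomposes as the sum over timesteps of the expected
advantage of `π'` over `π` on `π'`'s state visitation distribution, where advantages are
measured by the `Q`-function of `π`. -/
theorem performance_difference_lemma {S A : Type} [Fintype S] [Fintype A]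
    (M : FinMDP S A) (π π' : Policy S A) (f : S → A → ℝ) (T : ℕ) :
    M.J π' f T - M.J π f T =
      ∑ t ∈ Finset.range T, ∑ s : S, (((M.visit π' t).map Prod.fst) s).toReal *
        ((∑ a : A, ((π' t s) a).toReal * M.Q π f T t s a) -
         (∑ a : A, ((π t s) a).toReal * M.Q π f T t s a)) := by
  set hybrid : ℕ → ℝ := fun t =>
    expF (((M.visit π' t).map Prod.fst).compProd (π t)) (M.Q π f T t) with hybrid_def
  have advantage_eq : ∀ t ∈ Finset.range T,
      ∑ s : S, (((M.visit π' t).map Prod.fst) s).toReal *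
        ((∑ a : A, ((π' t s) a).toReal * M.Q π f T t s a) -
         (∑ a : A, ((π t s) a).toReal * M.Q π f T t s a)) =
        expF (M.visit π' t) f + (hybrid (t + 1) - hybrid t) := by
    intro t ht
    simp only [mul_sub, Finset.sum_sub_distrib, hybrid_def, ← expF_compProd,
      ← visit_eq_compProd, expF_Q_eq_add M π f (Finset.mem_range.mp ht), step_eq_compProd,
      visit_succ_map_fst]
    ring
  have hybrid_zero : hybrid 0 = M.J π f T := by
    simp only [hybrid_def, visit_zero_map_fst, J_eq_expF_Q]
    rfl
  have hybrid_horizon : hybrid T = 0 := expF_Q_horizon M π f T _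
  rw [Finset.sum_congr rfl advantage_eq, Finset.sum_add_distrib, Finset.sum_range_sub hybrid,
    hybrid_zero, hybrid_horizon, J]
  ring
end

section
/- In the Forked Tree MDP, under best-response dynamics where the policy player best-responds via NRPI to a no-regret discriminator (the DUAL algorithm), the iterates cycle between π_1 and π_2 forever and never select the expert policy π_E; in contrast, NRMM(BR), NRMM(NR), and standard primal/dual IRL all converge to π_E in finitely many iterations. -/
namespace ForkedTree

/-- Policies of the Forked Tree MDP: `0` = `π_E` (always left), `1` = `π_1` (center),
`2` = `π_2` (right). -/
abbrev Pol := Fin 3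

/-- Candidate rewards: `0` = the true reward `r`, `1` = the distractor `r̃`. -/
abbrev Rew := Fin 2

/-- The moment-matching payoff `J(π, f) − J(π_E, f)` in the Forked Tree MDP:
`0` for `π_E` under both rewards; `−2` under `r` and `−3` under `r̃` for `π_1`, `π_2`. -/
def Jgap (p : Pol) (f : Rew) : ℝ :=
  if p = 0 then 0 else if f = 0 then -2 else -3

/-- The NRPI-style payoff `J_E^k(π, f) = (1/T) Σ_t E_{s∼ρ_E^t}[f(s, π(s)) + V^{π_k,f}(s')]`:
the value of playing `π` for one step from expert states and rolling out with the previous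
policy `π_k`. Rows: the one-step policy `p`; columns: the reward `f`; indexed by the rollout
policy `k`. -/
def JE (k p : Pol) (f : Rew) : ℝ :=
  if p = 0 then (if f = 0 then 1 else if k = 0 then 2 else 1.5)
  else if p = k then 0
  else if f = 0 then 0
  else if k = 0 then 0
  else 2

/-- **The DUAL algorithm cycles and never selects the expert (Theorem 7 / Example 1).**
In the Forked Tree MDP, consider the `DUAL` dynamics: the discriminator `rew n` best
responds to the current policy in the moment-matching payoff (maximizing
`J(π_E, f) − J(π, f) = −Jgap π f`), and the policy player best responds via NRPI, i.e.
`pol (n+1)` maximizes the expert-reset payoff `J_E^{pol n}(·, rew n)` rolled out with the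
previous policy. Starting from `pol 0 = π_1`, the iterates alternate `π_1, π_2, π_1, …`
forever and never select the expert policy `π_E`. In contrast, `π_E` strictly dominates
`π_1` and `π_2` under every candidate reward in the moment-matching payoff (last
conjunct), so `NRMM(BR)`, `NRMM(NR)`, and standard primal/dual IRL — all of which select
policies against this payoff — converge to `π_E` in finitely many iterations. -/
theorem dual_cycles_never_expert (pol : ℕ → Pol) (rew : ℕ → Rew)
    (hpol0 : pol 0 = 1)
    (hrew : ∀ n, ∀ g : Rew, -Jgap (pol n) g ≤ -Jgap (pol n) (rew n))
    (hbr : ∀ n, ∀ q : Pol, JE (pol n) q (rew n) ≤ JE (pol n) (pol (n + 1)) (rew n))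
    (hbrStrict : ∀ n, ∀ q : Pol, q ≠ pol (n + 1) →
      JE (pol n) q (rew n) < JE (pol n) (pol (n + 1)) (rew n)) :
    (∀ n, pol n = if n % 2 = 0 then 1 else 2) ∧
    (∀ n, pol n ≠ 0) ∧
    (∀ f : Rew, ∀ p : Pol, p ≠ 0 → Jgap p f < Jgap 0 f) := by
  have fin2 : ∀ a : Rew, a = 0 ∨ a = 1 := by decide
  have fin3 : ∀ a : Pol, a = 0 ∨ a = 1 ∨ a = 2 := by decide
  -- step lemma: if pol n ∈ {1,2}, rew n = 1 and pol (n+1) is the other one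
  have step : ∀ n, (pol n = 1 → pol (n+1) = 2) ∧ (pol n = 2 → pol (n+1) = 1) := by
    intro n
    have hrn : ∀ h : pol n ≠ 0, rew n = 1 := by
      intro h
      rcases fin2 (rew n) with h0 | h1
      · exfalso
        have := hrew n 1
        rcases fin3 (pol n) with h' | h' | h' <;> simp [h', h0, Jgap] at this ⊢
        · exact h h'
        · norm_num at this
        · norm_num at this
      · exact h1
    constructor
    · intro h1
      have hr := hrn (by simp [h1])
      rcases fin3 (pol (n+1)) with h' | h' | h'
      · have := hbrStrict n 2 (by simp [h'])
        simp [h1, hr, h', JE] at this; norm_num at this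
      · have := hbrStrict n 2 (by simp [h'])
        simp [h1, hr, h', JE] at this; norm_num at this
      · exact h'
    · intro h2
      have hr := hrn (by simp [h2])
      rcases fin3 (pol (n+1)) with h' | h' | h'
      · have := hbrStrict n 1 (by simp [h'])
        simp [h2, hr, h', JE] at this; norm_num at this
      · exact h'
      · have := hbrStrict n 1 (by simp [h'])
        simp [h2, hr, h', JE] at this; norm_num at this
  have key : ∀ n, pol n = if n % 2 = 0 then 1 else 2 := by
    intro n
    induction n with
    | zero => simpa using hpol0
    | succ n ih =>
      rcases Nat.mod_two_eq_zero_or_one n with h | h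
      · have : pol (n+1) = 2 := (step n).1 (by simpa [h] using ih)
        simp [Nat.succ_mod_two_eq_one_iff.mpr h, this]
      · have : pol (n+1) = 1 := (step n).2 (by simpa [h] using ih)
        simp [Nat.succ_mod_two_eq_zero_iff.mpr h, this]
  refine ⟨key, ?_, ?_⟩
  · intro n
    have := key n
    rcases Nat.mod_two_eq_zero_or_one n with h | h <;> simp [h] at this <;> simp [this]
  · intro f p hp
    rcases fin3 p with h | h | h <;> rcases fin2 f with hf | hf <;>
      simp [h, hf, Jgap] at hp ⊢ <;> norm_num


end ForkedTree
end
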